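/- Let F be a sparseness measure with cost function J on ℝⁿ, let A be an m×n real matrix, and let k ≥ 1. Then A satisfies RRC at sparsity k for J with some constant C > 0 if and only if there exists d > 0 such that every linear subspace ν' of ℝⁿ with dim ν' = dim(ker A) and ‖P_{ker A} − P_{ν'}‖ ≤ d satisfies NSP at sparsity k for J. (This is the statement that the set of null spaces satisfying RRC is exactly the interior, in the projection metric on subspaces of fixed dimension, of the set of null spaces satisfying the exact recovery condition.) -/

import Mathlib

/-! If a subspace `ν'` near `ker A` contained a vector `z` violating NSP on `T`, then `A z` would
be small, since `z` is nearly in `ker A`, and the pair `x̄ = -z_T`, `x̂ = z_{Tᶜ}` would contradict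
robust recovery: `x̂ - x̄ = z` while `J(x̂) ≤ J(x̄)`.

Conversely, a recovery error `z = x̂ - x̄` lies in the cone `J(z_{Tᶜ}) ≤ J(z_T)`, and its component
`q` orthogonal to `ker A` is at most a multiple of `‖A z‖ ≤ 2ε`. Its component `u` in `ker A` is at
most `4 ‖q‖ / d`: otherwise tilting the line `ℝ u` of `ker A` to `ℝ (u + q)` gives a subspace of
the same dimension, within projection distance `4 ‖q‖ / ‖u‖ ≤ d` of `ker A`, that contains `z` and
so violates NSP. -/

noncomputable section

/-- `F : ℝ → ℝ` is a sparseness measure: nonnegative on `[0,∞)`,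
vanishing exactly at `0`, and `F (|·|)` is subadditive on `ℝ`. -/
def SparsenessMeasure (F : ℝ → ℝ) : Prop :=
  (∀ t : ℝ, 0 ≤ t → 0 ≤ F t) ∧
  (∀ t : ℝ, 0 ≤ t → (F t = 0 ↔ t = 0)) ∧
  (∀ x y : ℝ, F |x + y| ≤ F |x| + F |y|)

/-- The cost function `J(x) = ∑ i, F |x i|` on `ℝⁿ`. -/
def costJ {n : ℕ} (F : ℝ → ℝ) (x : EuclideanSpace ℝ (Fin n)) : ℝ :=
  ∑ i, F |x i|

/-- The restricted cost `J(x_T) = ∑ i ∈ T, F |x i|`. -/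
def costJT {n : ℕ} (F : ℝ → ℝ) (T : Finset (Fin n)) (x : EuclideanSpace ℝ (Fin n)) : ℝ :=
  ∑ i ∈ T, F |x i|

/-- `x` has at most `k` nonzero entries. -/
def Sparse {n : ℕ} (k : ℕ) (x : EuclideanSpace ℝ (Fin n)) : Prop :=
  ∃ T : Finset (Fin n), T.card ≤ k ∧ ∀ i ∉ T, x i = 0

/-- The matrix `A` acting as a continuous linear map between Euclidean spaces. -/
def mulVecCLM {m n : ℕ} (A : Matrix (Fin m) (Fin n) ℝ) :
    EuclideanSpace ℝ (Fin n) →L[ℝ] EuclideanSpace ℝ (Fin m) :=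
  (((EuclideanSpace.equiv (Fin m) ℝ).symm : (Fin m → ℝ) →L[ℝ] EuclideanSpace ℝ (Fin m)).comp
    (Matrix.mulVecLin A).toContinuousLinearMap).comp
    ((EuclideanSpace.equiv (Fin n) ℝ) : EuclideanSpace ℝ (Fin n) →L[ℝ] (Fin n → ℝ))

/-- `A` satisfies the robust recovery condition at sparsity `k` for the cost `J_F`
with constant `C`: for every `k`-sparse `x̄`, every `ε > 0`, every noise `v` with
`‖v‖ ≤ ε`, and every feasible `x̂` with `J(x̂) ≤ J(x̄)`, one has `‖x̄ - x̂‖ ≤ C ε`. -/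
def RRC {m n : ℕ} (A : Matrix (Fin m) (Fin n) ℝ) (k : ℕ) (F : ℝ → ℝ) (C : ℝ) : Prop :=
  ∀ xbar : EuclideanSpace ℝ (Fin n), Sparse k xbar →
    ∀ ε : ℝ, 0 < ε →
      ∀ v : EuclideanSpace ℝ (Fin m), ‖v‖ ≤ ε →
        ∀ xhat : EuclideanSpace ℝ (Fin n),
          ‖mulVecCLM A xhat - (mulVecCLM A xbar + v)‖ ≤ ε →
            costJ F xhat ≤ costJ F xbar → ‖xbar - xhat‖ ≤ C * ε

/-- The robust null space condition with parameter `d` for `(A, k, J_F)`. -/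
def RNSP {m n : ℕ} (A : Matrix (Fin m) (Fin n) ℝ) (k : ℕ) (F : ℝ → ℝ) (d : ℝ) : Prop :=
  ∀ z ∈ LinearMap.ker (mulVecCLM A : EuclideanSpace ℝ (Fin n) →ₗ[ℝ] EuclideanSpace ℝ (Fin m)), z ≠ 0 →
    ∀ η : EuclideanSpace ℝ (Fin n), ‖η‖ < d * ‖z‖ →
      ∀ T : Finset (Fin n), T.card ≤ k →
        costJT F T (z + η) < costJT F Tᶜ (z + η)

/-- The subspace `ν` satisfies the null space property at sparsity `k` for `J_F`. -/
def NSP {n : ℕ} (ν : Submodule ℝ (EuclideanSpace ℝ (Fin n))) (k : ℕ) (F : ℝ → ℝ) : Prop :=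
  ∀ z ∈ ν, z ≠ 0 → ∀ T : Finset (Fin n), T.card ≤ k → costJT F T z < costJT F Tᶜ z

/-- The orthogonal projection onto `ν`, as a continuous linear map `ℝⁿ → ℝⁿ`. -/
def projCLM {n : ℕ} (ν : Submodule ℝ (EuclideanSpace ℝ (Fin n))) :
    EuclideanSpace ℝ (Fin n) →L[ℝ] EuclideanSpace ℝ (Fin n) :=
  ν.subtypeL.comp (ν.orthogonalProjectionOnto)

open scoped InnerProductSpace
open Module

section Normalize

variable {V : Type*} [NormedAddCommGroup V] [NormedSpace ℝ V]

lemma norm_inv_norm_smul_sub_inv_norm_smul_le {u s : V} (hu : u ≠ 0) :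
    ‖‖u‖⁻¹ • u - ‖s‖⁻¹ • s‖ ≤ 2 * ‖u - s‖ / ‖u‖ := by
  have hun : 0 < ‖u‖ := norm_pos_iff.2 hu
  rcases eq_or_ne s 0 with rfl | hs
  · rw [sub_zero, smul_zero, sub_zero, norm_smul, norm_inv, norm_norm, inv_mul_cancel₀ hun.ne',
      mul_div_assoc, div_self hun.ne']
    norm_num
  have hsn : 0 < ‖s‖ := norm_pos_iff.2 hs
  have hsplit : ‖u‖⁻¹ • u - ‖s‖⁻¹ • s = ‖u‖⁻¹ • (u - s) + (‖u‖⁻¹ - ‖s‖⁻¹) • s := by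
    rw [smul_sub, sub_smul]; abel
  have h₁ : ‖‖u‖⁻¹ • (u - s)‖ = ‖u - s‖ / ‖u‖ := by
    rw [norm_smul, norm_inv, norm_norm, inv_mul_eq_div]
  have h₂ : ‖(‖u‖⁻¹ - ‖s‖⁻¹) • s‖ ≤ ‖u - s‖ / ‖u‖ := by
    have hscalar : (‖u‖⁻¹ - ‖s‖⁻¹) * ‖s‖ = (‖s‖ - ‖u‖) / ‖u‖ := by field_simp
    rw [norm_smul, Real.norm_eq_abs, ← abs_of_pos hsn, ← abs_mul, abs_of_pos hsn, hscalar,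
      abs_div, abs_of_pos hun]
    gcongr
    rw [abs_sub_comm]
    exact abs_norm_sub_norm_le u s
  calc ‖‖u‖⁻¹ • u - ‖s‖⁻¹ • s‖
      ≤ ‖‖u‖⁻¹ • (u - s)‖ + ‖(‖u‖⁻¹ - ‖s‖⁻¹) • s‖ := hsplit ▸ norm_add_le _ _
    _ ≤ ‖u - s‖ / ‖u‖ + ‖u - s‖ / ‖u‖ := by rw [h₁]; gcongr
    _ = 2 * ‖u - s‖ / ‖u‖ := by ring

end Normalize

namespace Submodule

variable {𝕜 E : Type*} [RCLike 𝕜] [NormedAddCommGroup E] [InnerProductSpace 𝕜 E]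

lemma starProjection_sup_apply_of_isOrtho {U V : Submodule 𝕜 E} (h : U ⟂ V)
    [U.HasOrthogonalProjection] [V.HasOrthogonalProjection] [(U ⊔ V).HasOrthogonalProjection]
    (x : E) : (U ⊔ V).starProjection x = U.starProjection x + V.starProjection x := by
  refine eq_starProjection_of_mem_of_inner_eq_zero
    (add_mem (mem_sup_left (U.starProjection_apply_mem x))
      (mem_sup_right (V.starProjection_apply_mem x))) ?_
  rintro w hw
  obtain ⟨w₁, hw₁, w₂, hw₂, rfl⟩ := mem_sup.1 hw
  have hU := U.starProjection_inner_eq_zero x w₁ hw₁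
  have hV := V.starProjection_inner_eq_zero x w₂ hw₂
  have hUV := h.inner_eq (U.starProjection_apply_mem x) hw₂
  have hVU := h.symm.inner_eq (V.starProjection_apply_mem x) hw₁
  simp only [inner_sub_left, inner_add_left, inner_add_right] at hU hV ⊢
  linear_combination hU + hV - hUV - hVU

lemma IsOrtho.finrank_sup {U V : Submodule 𝕜 E} (h : U ⟂ V) [FiniteDimensional 𝕜 U]
    [FiniteDimensional 𝕜 V] : finrank 𝕜 ↥(U ⊔ V) = finrank 𝕜 U + finrank 𝕜 V := by
  have := finrank_sup_add_finrank_inf_eq U V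
  rwa [h.disjoint.eq_bot, finrank_bot, add_zero] at this

end Submodule

section Perturbation

variable {E : Type*} [NormedAddCommGroup E] [InnerProductSpace ℝ E]

lemma norm_starProjection_span_unit_sub_le {a b : E} (ha : ‖a‖ = 1) (hb : ‖b‖ = 1) :
    ‖(ℝ ∙ a).starProjection - (ℝ ∙ b).starProjection‖ ≤ 2 * ‖a - b‖ := by
  refine ContinuousLinearMap.opNorm_le_bound _ (by positivity) fun x ↦ ?_
  rw [sub_apply, Submodule.starProjection_unit_singleton ℝ ha,
    Submodule.starProjection_unit_singleton ℝ hb]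
  have hsplit : ⟪a, x⟫_ℝ • a - ⟪b, x⟫_ℝ • b = ⟪a - b, x⟫_ℝ • a + ⟪b, x⟫_ℝ • (a - b) := by
    rw [inner_sub_left, sub_smul, smul_sub]; abel
  have h₁ : ‖⟪a - b, x⟫_ℝ • a‖ ≤ ‖a - b‖ * ‖x‖ := by
    rw [norm_smul, ha, mul_one]
    exact norm_inner_le_norm _ _
  have h₂ : ‖⟪b, x⟫_ℝ • (a - b)‖ ≤ ‖x‖ * ‖a - b‖ := by
    rw [norm_smul]
    gcongr
    simpa [hb] using norm_inner_le_norm (𝕜 := ℝ) b x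
  calc ‖⟪a, x⟫_ℝ • a - ⟪b, x⟫_ℝ • b‖
      ≤ ‖⟪a - b, x⟫_ℝ • a‖ + ‖⟪b, x⟫_ℝ • (a - b)‖ := hsplit ▸ norm_add_le _ _
    _ ≤ 2 * ‖a - b‖ * ‖x‖ := by linarith

lemma norm_starProjection_span_singleton_sub_le {u s : E} (hu : u ≠ 0) (hs : s ≠ 0) :
    ‖(ℝ ∙ u).starProjection - (ℝ ∙ s).starProjection‖ ≤ 4 * ‖u - s‖ / ‖u‖ := by
  have span_normalize {v : E} (hv : v ≠ 0) : (ℝ ∙ v) = ℝ ∙ (‖v‖⁻¹ • v) :=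
    (Submodule.span_singleton_smul_eq (inv_ne_zero (norm_ne_zero_iff.2 hv)).isUnit v).symm
  have norm_normalize {v : E} (hv : v ≠ 0) : ‖‖v‖⁻¹ • v‖ = 1 := by
    rw [norm_smul, norm_inv, norm_norm, inv_mul_cancel₀ (norm_ne_zero_iff.2 hv)]
  simp only [span_normalize hu, span_normalize hs]
  calc _ ≤ 2 * ‖‖u‖⁻¹ • u - ‖s‖⁻¹ • s‖ :=
        norm_starProjection_span_unit_sub_le (norm_normalize hu) (norm_normalize hs)
    _ ≤ 2 * (2 * ‖u - s‖ / ‖u‖) := by gcongr; exact norm_inv_norm_smul_sub_inv_norm_smul_le hu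
    _ = 4 * ‖u - s‖ / ‖u‖ := by ring

/-- Tilting the line `ℝ ∙ u` of `ν` to `ℝ ∙ (u + q)` while keeping its orthogonal complement
in `ν` fixed moves the projection by at most `4 ‖q‖ / ‖u‖`. -/
lemma exists_add_mem_finrank_eq_norm_starProjection_sub_le [FiniteDimensional ℝ E]
    {ν : Submodule ℝ E} {u q : E} (hu : u ∈ ν) (hu0 : u ≠ 0) (hq : q ∈ νᗮ) :
    ∃ ν' : Submodule ℝ E, u + q ∈ ν' ∧ finrank ℝ ν' = finrank ℝ ν ∧
      ‖ν.starProjection - ν'.starProjection‖ ≤ 4 * ‖q‖ / ‖u‖ := by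
  set W := (ℝ ∙ u)ᗮ ⊓ ν
  have hν : (ℝ ∙ u) ⊔ W = ν :=
    Submodule.sup_orthogonal_inf_of_hasOrthogonalProjection
      ((Submodule.span_singleton_le_iff_mem u ν).2 hu)
  have huW : (ℝ ∙ u) ⟂ W := (Submodule.isOrtho_orthogonal_right _).mono_right inf_le_left
  have hsW : (ℝ ∙ (u + q)) ⟂ W := by
    refine Submodule.isOrtho_iff_le.2 ((Submodule.span_singleton_le_iff_mem _ _).2 ?_)
    exact add_mem (huW.le (Submodule.mem_span_singleton_self u))
      (Submodule.isOrtho_iff_le.1 ((Submodule.isOrtho_orthogonal_right ν).symm.mono_right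
        inf_le_right) hq)
  have hs0 : u + q ≠ 0 := by
    intro h
    have huq : ⟪u, q⟫_ℝ = 0 := Submodule.inner_right_of_mem_orthogonal hu hq
    rw [eq_neg_of_add_eq_zero_right h, inner_neg_right, neg_eq_zero] at huq
    exact hu0 (inner_self_eq_zero.1 huq)
  refine ⟨(ℝ ∙ (u + q)) ⊔ W, Submodule.mem_sup_left (Submodule.mem_span_singleton_self _), ?_, ?_⟩
  · rw [← hν, huW.finrank_sup, hsW.finrank_sup, finrank_span_singleton hu0,
      finrank_span_singleton hs0]
  · have hdiff : ν.starProjection - ((ℝ ∙ (u + q)) ⊔ W).starProjection =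
        (ℝ ∙ u).starProjection - (ℝ ∙ (u + q)).starProjection := by
      ext x
      simp only [← hν, sub_apply,
        Submodule.starProjection_sup_apply_of_isOrtho huW,
        Submodule.starProjection_sup_apply_of_isOrtho hsW]
      abel
    rw [hdiff]
    simpa using norm_starProjection_span_singleton_sub_le hu0 hs0

end Perturbation

namespace ContinuousLinearMap

variable {𝕜 E F : Type*} [RCLike 𝕜] [NormedAddCommGroup E] [InnerProductSpace 𝕜 E]
  [NormedAddCommGroup F] [NormedSpace 𝕜 F]

lemma exists_norm_le_mul_norm_apply_of_mem_orthogonal_ker [FiniteDimensional 𝕜 E]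
    (f : E →L[𝕜] F) : ∃ c > 0, ∀ q ∈ (LinearMap.ker (f : E →ₗ[𝕜] F))ᗮ, ‖q‖ ≤ c * ‖f q‖ := by
  set K := (LinearMap.ker (f : E →ₗ[𝕜] F))ᗮ
  have hinj : LinearMap.ker ((f : E →ₗ[𝕜] F) ∘ₗ K.subtype) = ⊥ := by
    rw [LinearMap.ker_comp, ← Submodule.disjoint_iff_comap_eq_bot]
    exact (Submodule.orthogonal_disjoint _).symm
  obtain ⟨c, hc, hanti⟩ := LinearMap.exists_antilipschitzWith _ hinj
  refine ⟨c, hc, fun q hq ↦ ?_⟩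
  simpa using hanti.le_mul_dist ⟨q, hq⟩ 0

lemma norm_apply_le_of_mem (f : E →L[𝕜] F) {ν : Submodule 𝕜 E}
    [(LinearMap.ker (f : E →ₗ[𝕜] F)).HasOrthogonalProjection] [ν.HasOrthogonalProjection] {z : E}
    (hz : z ∈ ν) :
    ‖f z‖ ≤ ‖f‖ * ‖(LinearMap.ker (f : E →ₗ[𝕜] F)).starProjection - ν.starProjection‖ * ‖z‖ := by
  have hker : f ((LinearMap.ker (f : E →ₗ[𝕜] F)).starProjection z) = 0 :=
    LinearMap.mem_ker.1 ((LinearMap.ker (f : E →ₗ[𝕜] F)).starProjection_apply_mem z)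
  have hfz : f z = f ((ν.starProjection - (LinearMap.ker (f : E →ₗ[𝕜] F)).starProjection) z) := by
    rw [sub_apply, map_sub, Submodule.starProjection_eq_self_iff.2 hz, hker, sub_zero]
  rw [hfz, mul_assoc, norm_sub_rev]
  exact f.le_opNorm_of_le ((ν.starProjection - _).le_opNorm z)

end ContinuousLinearMap

lemma SparsenessMeasure.map_zero {F : ℝ → ℝ} (hF : SparsenessMeasure F) : F 0 = 0 :=
  (hF.2.1 0 le_rfl).2 rfl

section Cost

variable {n : ℕ} {F : ℝ → ℝ}

/-- The paper's `x_T`. -/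
def restrictTo (T : Finset (Fin n)) (x : EuclideanSpace ℝ (Fin n)) : EuclideanSpace ℝ (Fin n) :=
  WithLp.toLp 2 fun i ↦ if i ∈ T then x i else 0

lemma restrictTo_add_restrictTo_compl (T : Finset (Fin n)) (x : EuclideanSpace ℝ (Fin n)) :
    restrictTo T x + restrictTo Tᶜ x = x := by
  ext i
  by_cases hi : i ∈ T <;> simp [restrictTo, hi]

lemma costJ_restrictTo (hF0 : F 0 = 0) (T : Finset (Fin n)) (x : EuclideanSpace ℝ (Fin n)) :
    costJ F (restrictTo T x) = costJT F T x := by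
  simp only [costJ, costJT, restrictTo, apply_ite, abs_zero, hF0]
  rw [Finset.sum_ite_mem, Finset.univ_inter]

lemma costJ_neg (x : EuclideanSpace ℝ (Fin n)) : costJ F (-x) = costJ F x := by
  simp [costJ]

lemma costJ_eq_costJT_add_costJT_compl (T : Finset (Fin n)) (x : EuclideanSpace ℝ (Fin n)) :
    costJ F x = costJT F T x + costJT F Tᶜ x :=
  (Finset.sum_add_sum_compl T _).symm

lemma costJT_compl_sub_le (hF : SparsenessMeasure F) {T : Finset (Fin n)}
    {xbar xhat : EuclideanSpace ℝ (Fin n)} (hsupp : ∀ i ∉ T, xbar i = 0)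
    (hcost : costJ F xhat ≤ costJ F xbar) :
    costJT F Tᶜ (xhat - xbar) ≤ costJT F T (xhat - xbar) := by
  have hoff : costJT F Tᶜ (xhat - xbar) = costJT F Tᶜ xhat :=
    Finset.sum_congr rfl fun i hi ↦ by
      rw [PiLp.sub_apply, hsupp i (Finset.mem_compl.1 hi), sub_zero]
  have hbar : costJT F Tᶜ xbar = 0 :=
    Finset.sum_eq_zero fun i hi ↦ by rw [hsupp i (Finset.mem_compl.1 hi), abs_zero, hF.map_zero]
  have hsub : costJT F T xbar ≤ costJT F T xhat + costJT F T (xhat - xbar) := by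
    rw [costJT, costJT, costJT, ← Finset.sum_add_distrib]
    refine Finset.sum_le_sum fun i _ ↦ ?_
    have := hF.2.2 (xhat i) (-(xhat - xbar) i)
    rwa [show xhat i + -(xhat - xbar) i = xbar i by simp, abs_neg] at this
  rw [costJ_eq_costJT_add_costJT_compl T, costJ_eq_costJT_add_costJT_compl T, hbar] at hcost
  linarith

end Cost

section NullSpaceProperty

variable {m n k : ℕ} {A : Matrix (Fin m) (Fin n) ℝ} {F : ℝ → ℝ}

def nullSpace (A : Matrix (Fin m) (Fin n) ℝ) : Submodule ℝ (EuclideanSpace ℝ (Fin n)) :=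
  LinearMap.ker (mulVecCLM A : EuclideanSpace ℝ (Fin n) →ₗ[ℝ] EuclideanSpace ℝ (Fin m))

/-- `ker A` is an interior point, at radius `d` in the projection metric on subspaces of its
dimension, of the set of subspaces satisfying NSP. -/
def NSPNear (A : Matrix (Fin m) (Fin n) ℝ) (k : ℕ) (F : ℝ → ℝ) (d : ℝ) : Prop :=
  ∀ ν' : Submodule ℝ (EuclideanSpace ℝ (Fin n)), finrank ℝ ν' = finrank ℝ (nullSpace A) →
    ‖projCLM (nullSpace A) - projCLM ν'‖ ≤ d → NSP ν' k F

lemma RRC.norm_le {C : ℝ} (hRRC : RRC A k F C) (hF0 : F 0 = 0) {T : Finset (Fin n)}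
    (hT : T.card ≤ k) {z : EuclideanSpace ℝ (Fin n)} (hz : costJT F Tᶜ z ≤ costJT F T z)
    {ε : ℝ} (hε : 0 < ε) (hAz : ‖mulVecCLM A z‖ ≤ ε) : ‖z‖ ≤ C * ε := by
  have hdiff : restrictTo Tᶜ z - -restrictTo T z = z := by
    rw [sub_neg_eq_add, add_comm, restrictTo_add_restrictTo_compl]
  have hsparse : Sparse k (-restrictTo T z) := ⟨T, hT, fun i hi ↦ by simp [restrictTo, hi]⟩
  have h := hRRC _ hsparse ε hε 0 (by simpa using hε.le) (restrictTo Tᶜ z)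
    (by rwa [add_zero, ← map_sub, hdiff])
    (by rwa [costJ_neg, costJ_restrictTo hF0, costJ_restrictTo hF0])
  rwa [← norm_neg, neg_sub, hdiff] at h

lemma RRC.nspNear {C : ℝ} (hRRC : RRC A k F C) (hF0 : F 0 = 0) (hC : 0 < C) :
    NSPNear A k F (1 / (2 * C * (‖mulVecCLM A‖ + 1))) := by
  intro ν' _ hdist z hz hz0 T hT
  by_contra! hcone
  have hAz : ‖mulVecCLM A z‖ ≤ ‖z‖ / (2 * C) := calc
    ‖mulVecCLM A z‖ ≤ ‖mulVecCLM A‖ * ‖projCLM (nullSpace A) - projCLM ν'‖ * ‖z‖ :=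
        (mulVecCLM A).norm_apply_le_of_mem hz
    _ ≤ (‖mulVecCLM A‖ + 1) * (1 / (2 * C * (‖mulVecCLM A‖ + 1))) * ‖z‖ := by
      gcongr
      linarith
    _ = ‖z‖ / (2 * C) := by field_simp
  have hzpos : 0 < ‖z‖ := norm_pos_iff.2 hz0
  have hhalf : C * (‖z‖ / (2 * C)) = ‖z‖ / 2 := by field_simp
  have := hRRC.norm_le hF0 hT hcone (by positivity) hAz
  linarith

lemma NSPNear.norm_starProjection_le {d : ℝ} (hNSP : NSPNear A k F d) (hd : 0 < d)
    {T : Finset (Fin n)} (hT : T.card ≤ k) {z : EuclideanSpace ℝ (Fin n)}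
    (hz : costJT F Tᶜ z ≤ costJT F T z) :
    ‖(nullSpace A).starProjection z‖ ≤ 4 / d * ‖z - (nullSpace A).starProjection z‖ := by
  set K := nullSpace A
  by_contra! hlt
  have hu0 : K.starProjection z ≠ 0 := by
    intro hu
    rw [hu, norm_zero] at hlt
    exact hlt.not_ge (by positivity)
  have hun : 0 < ‖K.starProjection z‖ := norm_pos_iff.2 hu0
  obtain ⟨ν', hmem, hdim, hdist⟩ := exists_add_mem_finrank_eq_norm_starProjection_sub_le
    (K.starProjection_apply_mem z) hu0 (K.sub_starProjection_mem_orthogonal z)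
  rw [add_sub_cancel] at hmem
  have hdist' : 4 * ‖z - K.starProjection z‖ / ‖K.starProjection z‖ ≤ d := by
    rw [div_mul_eq_mul_div, div_lt_iff₀ hd] at hlt
    rw [div_le_iff₀ hun]
    linarith
  have hz0 : z ≠ 0 := by
    rintro rfl
    exact hu0 (map_zero _)
  exact (hNSP ν' hdim (hdist.trans hdist') z hmem hz0 T hT).not_ge hz

lemma NSPNear.exists_rrc (hF : SparsenessMeasure F) {d : ℝ} (hd : 0 < d)
    (hNSP : NSPNear A k F d) : ∃ C > 0, RRC A k F C := by
  set K := nullSpace A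
  obtain ⟨c, hc, hlow⟩ := (mulVecCLM A).exists_norm_le_mul_norm_apply_of_mem_orthogonal_ker
  refine ⟨2 * c * (4 / d + 1), by positivity, ?_⟩
  rintro xbar ⟨T, hT, hsupp⟩ ε hε v hv xhat hfeas hcost
  set z := xhat - xbar
  have hAz : ‖mulVecCLM A z‖ ≤ 2 * ε := calc
    ‖mulVecCLM A z‖ = ‖(mulVecCLM A xhat - (mulVecCLM A xbar + v)) + v‖ := by
      rw [map_sub]; abel_nf
    _ ≤ 2 * ε := by linarith [norm_add_le_of_le hfeas hv]
  have hKz : mulVecCLM A (K.starProjection z) = 0 :=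
    LinearMap.mem_ker.1 (K.starProjection_apply_mem z)
  have hq : ‖z - K.starProjection z‖ ≤ c * ‖mulVecCLM A z‖ := by
    simpa [hKz] using hlow _ (K.sub_starProjection_mem_orthogonal z)
  have hcone : costJT F Tᶜ z ≤ costJT F T z := costJT_compl_sub_le hF hsupp hcost
  have hu := hNSP.norm_starProjection_le hd hT hcone
  calc ‖xbar - xhat‖ = ‖K.starProjection z + (z - K.starProjection z)‖ := by
        rw [add_sub_cancel, norm_sub_rev]
    _ ≤ (4 / d + 1) * ‖z - K.starProjection z‖ := by
        linarith [norm_add_le (K.starProjection z) (z - K.starProjection z)]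
    _ ≤ (4 / d + 1) * (c * (2 * ε)) := by
        gcongr
        exact hq.trans (by gcongr)
    _ = 2 * c * (4 / d + 1) * ε := by ring

end NullSpaceProperty

theorem stmt3_general {m n : ℕ} (F : ℝ → ℝ) (hF : SparsenessMeasure F)
    (A : Matrix (Fin m) (Fin n) ℝ) (k : ℕ) :
    (∃ C > 0, RRC A k F C) ↔
      (∃ d > 0, ∀ ν' : Submodule ℝ (EuclideanSpace ℝ (Fin n)),
        Module.finrank ℝ ν' = Module.finrank ℝ (LinearMap.ker (mulVecCLM A : EuclideanSpace ℝ (Fin n) →ₗ[ℝ] EuclideanSpace ℝ (Fin m))) →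
        ‖projCLM (LinearMap.ker (mulVecCLM A : EuclideanSpace ℝ (Fin n) →ₗ[ℝ] EuclideanSpace ℝ (Fin m))) - projCLM ν'‖ ≤ d →
        NSP ν' k F) := by
  constructor
  · rintro ⟨C, hC, hRRC⟩
    exact ⟨_, by positivity, hRRC.nspNear hF.map_zero hC⟩
  · rintro ⟨d, hd, hNSP⟩
    exact NSPNear.exists_rrc hF hd hNSP

/-- Theorem 2: `A` satisfies RRC at sparsity `k` for `J` with some
constant `C > 0` iff there is `d > 0` such that every subspace `ν'` of the same dimension
as `ker A` with `‖P_{ker A} − P_{ν'}‖ ≤ d` satisfies NSP at sparsity `k` for `J`. -/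
theorem stmt3 {m n : ℕ} (F : ℝ → ℝ) (hF : SparsenessMeasure F)
    (A : Matrix (Fin m) (Fin n) ℝ) (k : ℕ) (hk : 1 ≤ k) :
    (∃ C > 0, RRC A k F C) ↔
      (∃ d > 0, ∀ ν' : Submodule ℝ (EuclideanSpace ℝ (Fin n)),
        Module.finrank ℝ ν' = Module.finrank ℝ (LinearMap.ker (mulVecCLM A : EuclideanSpace ℝ (Fin n) →ₗ[ℝ] EuclideanSpace ℝ (Fin m))) →
        ‖projCLM (LinearMap.ker (mulVecCLM A : EuclideanSpace ℝ (Fin n) →ₗ[ℝ] EuclideanSpace ℝ (Fin m))) - projCLM ν'‖ ≤ d →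
        NSP ν' k F) :=
  stmt3_general F hF A k
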